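/- Let μ > 0, n ∈ ℕ, and T(n) the tridiagonal matrix with diagonal 2j, subdiagonal μ, superdiagonal −μ. For all 1 ≤ i ≤ j ≤ n, the entry of the inverse satisfies |(T(n)^{-1})_{ij}| ≤ μ^{j−i}/(d_i d_{i+1} ⋯ d_j), where d_n = 2n and d_j = 2j + μ²/d_{j+1}. -/

import Mathlib

/-!
Index rows from `1` and write `θ_k`, `φ_m` for the leading `k × k` and the trailing `m × m`
principal minors of `T(n)`; both are continuants, i.e. satisfy three-term recursions with coupling
`μ²`. The pivots of backward elimination are ratios of consecutive trailing minors,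
`d_l = φ_{n-l+1} / φ_{n-l}`, so the bound equals `μ^(j-i) φ_{n-j} / φ_{n-i+1}`. The classical
formula for the inverse of a tridiagonal matrix gives `(T⁻¹)_{ij} = μ^(j-i) θ_{i-1} φ_{n-j} / det T`
for `i ≤ j`, and expanding `det T` across the cut between rows `i - 1` and `i` gives
`det T = θ_{i-1} φ_{n-i+1} + μ² θ_{i-2} φ_{n-i} ≥ θ_{i-1} φ_{n-i+1}`.
-/

open Finset

section Continuant

variable {R : Type*} [CommRing R] (b : ℕ → R) (c : R)

/-- `continuant b c (k + 1)` (note the shift) is the determinant of the `k × k` tridiagonal matrix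
with diagonal `b 0, …, b (k - 1)` whose off-diagonal products `A (i + 1) i * A i (i + 1)` all
equal `-c`. -/
def continuant : ℕ → R
  | 0 => 0
  | 1 => 1
  | k + 2 => b k * continuant (k + 1) + c * continuant k

@[simp] lemma continuant_zero : continuant b c 0 = 0 := rfl

@[simp] lemma continuant_one : continuant b c 1 = 1 := rfl

lemma continuant_add_two (k : ℕ) :
    continuant b c (k + 2) = b k * continuant b c (k + 1) + c * continuant b c k := rfl

/-- Expansion of the determinant of size `n` across the cut after its first `k` rows; the
trailing minors are the continuants of the reversed sequence. -/
lemma continuant_split {n k m : ℕ} (h : k + m = n) :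
    continuant b c (k + 1) * continuant (fun l => b (n - 1 - l)) c (m + 1)
      + c * continuant b c k * continuant (fun l => b (n - 1 - l)) c m
      = continuant b c (n + 1) := by
  induction m generalizing k with
  | zero => subst h; simp
  | succ m ih =>
    have hk : n - 1 - m = k := by omega
    have := ih (k := k + 1) (by omega)
    rw [continuant_add_two _ _ m, hk]
    rw [continuant_add_two b c k] at this
    linear_combination this

section Ordered

variable [PartialOrder R] [IsStrictOrderedRing R] {b : ℕ → R} {c : R}

lemma continuant_pos (hb : ∀ k, 0 < b k) (hc : 0 ≤ c) : ∀ k, 0 < continuant b c (k + 1)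
  | 0 => by simp
  | 1 => by simpa [continuant_add_two] using hb 0
  | k + 2 => by
    rw [continuant_add_two]
    exact add_pos_of_pos_of_nonneg (mul_pos (hb _) (continuant_pos hb hc (k + 1)))
      (mul_nonneg hc (continuant_pos hb hc k).le)

lemma continuant_pos_of_ne_zero (hb : ∀ k, 0 < b k) (hc : 0 ≤ c) {k : ℕ} (hk : k ≠ 0) :
    0 < continuant b c k := by
  obtain ⟨m, rfl⟩ := Nat.exists_eq_succ_of_ne_zero hk
  exact continuant_pos hb hc m

lemma continuant_nonneg (hb : ∀ k, 0 < b k) (hc : 0 ≤ c) : ∀ k, 0 ≤ continuant b c k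
  | 0 => le_rfl
  | k + 1 => (continuant_pos hb hc k).le

lemma continuant_mul_le_of_add_eq (hb : ∀ k, 0 < b k) (hc : 0 ≤ c) {n k m : ℕ} (h : k + m = n) :
    continuant b c (k + 1) * continuant (fun l => b (n - 1 - l)) c (m + 1)
      ≤ continuant b c (n + 1) := by
  rw [← continuant_split b c h, le_add_iff_nonneg_right]
  exact mul_nonneg (mul_nonneg hc (continuant_nonneg hb hc k))
    (continuant_nonneg (fun l => hb (n - 1 - l)) hc m)

end Ordered

end Continuant

section Tridiagonal

variable {R : Type*} [CommRing R] (b : ℕ → R) (s t : R) (n : ℕ)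

def tridiagonal : Matrix (Fin n) (Fin n) R :=
  Matrix.of fun i j =>
    if (i : ℕ) = j then b j else if (i : ℕ) = (j : ℕ) + 1 then s
    else if (j : ℕ) = (i : ℕ) + 1 then t else 0

local notation "θ" => continuant b (-(s * t))
local notation "φ" => continuant (fun l => b (n - 1 - l)) (-(s * t))

/-- The adjugate of `tridiagonal b s t n`, extended to all of `ℕ × ℕ`: `θ (i + 1)` is the leading
`i × i` and `φ (n - j)` the trailing `(n - 1 - j) × (n - 1 - j)` principal minor. -/
def tridiagonalAdjugate (i j : ℕ) : R :=
  if i ≤ j then (-t) ^ (j - i) * θ (i + 1) * φ (n - j)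
  else (-s) ^ (i - j) * θ (j + 1) * φ (n - i)

variable {b s t n}

lemma tridiagonalAdjugate_of_le {i j : ℕ} (h : i ≤ j) :
    tridiagonalAdjugate b s t n i j = (-t) ^ (j - i) * θ (i + 1) * φ (n - j) :=
  if_pos h

lemma tridiagonalAdjugate_of_ge {i j : ℕ} (h : j ≤ i) :
    tridiagonalAdjugate b s t n i j = (-s) ^ (i - j) * θ (j + 1) * φ (n - i) := by
  rcases h.eq_or_lt with rfl | h
  · simp [tridiagonalAdjugate]
  · exact if_neg (not_le.2 h)

lemma tridiagonalAdjugate_row {i j : ℕ} (hi : i < n) :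
    (if i = 0 then 0 else s * tridiagonalAdjugate b s t n (i - 1) j)
      + b i * tridiagonalAdjugate b s t n i j + t * tridiagonalAdjugate b s t n (i + 1) j
      = if i = j then θ (n + 1) else 0 := by
  rcases lt_or_ge j i with hji | hij
  · -- below the diagonal the column follows the recursion of the trailing minors
    obtain ⟨r, rfl⟩ := Nat.exists_eq_add_of_lt hji
    obtain ⟨m, rfl⟩ := Nat.exists_eq_add_of_lt hi
    rw [if_neg (by omega), if_neg (by omega), tridiagonalAdjugate_of_ge (by omega),
      tridiagonalAdjugate_of_ge (by omega), tridiagonalAdjugate_of_ge (by omega)]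
    have hφ := continuant_add_two (fun l => b (j + r + 1 + m + 1 - 1 - l)) (-(s * t)) m
    simp only [show j + r + 1 - 1 - j = r by omega, show j + r + 1 - j = r + 1 by omega,
      show j + r + 1 + 1 - j = r + 2 by omega,
      show j + r + 1 + m + 1 - (j + r + 1 - 1) = m + 2 by omega,
      show j + r + 1 + m + 1 - (j + r + 1) = m + 1 by omega,
      show j + r + 1 + m + 1 - (j + r + 1 + 1) = m by omega,
      show j + r + 1 + m + 1 - 1 - m = j + r + 1 by omega] at hφ ⊢
    linear_combination (-s) ^ r * θ (j + 1) * s * hφ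
  · -- the missing neighbour above row `0` is harmless since `θ 0 = 0`
    have hprev : (if i = 0 then 0 else s * tridiagonalAdjugate b s t n (i - 1) j)
        = s * ((-t) ^ (j + 1 - i) * θ i * φ (n - j)) := by
      rcases i with _ | i
      · simp
      · rw [if_neg (by omega), tridiagonalAdjugate_of_le (by omega)]
        simp only [Nat.add_sub_cancel, Nat.add_sub_add_right]
    have hθ := continuant_add_two b (-(s * t)) i
    rw [hprev, tridiagonalAdjugate_of_le hij]
    rcases hij.eq_or_lt with rfl | hij
    · obtain ⟨m, rfl⟩ := Nat.exists_eq_add_of_lt hi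
      have hsplit := continuant_split b (-(s * t)) (n := i + m + 1) (k := i + 1) (m := m) (by omega)
      rw [if_pos rfl, tridiagonalAdjugate_of_ge (by omega : i ≤ i + 1)]
      simp only [Nat.sub_self, show i + 1 - i = 1 by omega, show i + m + 1 - i = m + 1 by omega,
        show i + m + 1 - (i + 1) = m by omega, show i + m + 1 - 1 = i + m by omega] at hsplit ⊢
      linear_combination hsplit - continuant (fun l => b (i + m - l)) (-(s * t)) (m + 1) * hθ
    · -- above the diagonal the column follows the recursion of the leading minors
      obtain ⟨r, rfl⟩ := Nat.exists_eq_add_of_lt hij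
      rw [if_neg (by omega), tridiagonalAdjugate_of_le (by omega)]
      simp only [show i + r + 1 + 1 - i = r + 2 by omega, show i + r + 1 - i = r + 1 by omega,
        show i + r + 1 - (i + 1) = r by omega]
      linear_combination t * (-t) ^ r * φ (n - (i + r + 1)) * hθ

lemma tridiagonal_mul_apply {F : ℕ → R} (hF : F n = 0) (i : Fin n) :
    ∑ k : Fin n, tridiagonal b s t n i k * F k
      = (if (i : ℕ) = 0 then 0 else s * F (i - 1)) + b i * F i + t * F (i + 1) := by
  let g : ℕ → R := fun k => (if k = i then b i * F i else 0)
    + (if k + 1 = i then s * F k else 0) + (if k = i + 1 then t * F k else 0)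
  have hg : ∀ k : Fin n, tridiagonal b s t n i k * F k = g k := by
    intro k
    obtain ⟨k, -⟩ := k
    obtain ⟨i, -⟩ := i
    simp only [tridiagonal, Matrix.of_apply, g]
    split_ifs <;> first | omega | (subst_vars; ring)
  have hext : ∑ k ∈ range n, g k = ∑ k ∈ range (n + 1), g k := by
    simp [Finset.sum_range_succ, g, hF, i.isLt.ne']
  rw [Finset.sum_congr rfl fun k _ => hg k, Fin.sum_univ_eq_sum_range g, hext]
  obtain ⟨_ | i, hi⟩ := i
  · simp [g, Finset.sum_add_distrib, hi.ne']
  · simp [g, Finset.sum_add_distrib, hi, hi.le, (Nat.le_succ i).trans hi.le]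
    ring

lemma tridiagonal_mul_adjugate :
    tridiagonal b s t n * Matrix.of (fun i j : Fin n => tridiagonalAdjugate b s t n i j)
      = θ (n + 1) • 1 := by
  ext i j
  have hF : tridiagonalAdjugate b s t n n j = 0 := by simp [tridiagonalAdjugate_of_ge j.isLt.le]
  simp only [Matrix.mul_apply, Matrix.of_apply]
  rw [tridiagonal_mul_apply (F := fun k => tridiagonalAdjugate b s t n k j) hF,
    tridiagonalAdjugate_row i.isLt]
  simp [Matrix.one_apply, Fin.ext_iff]

end Tridiagonal

section Inverse

variable {K : Type*} [Field K] {b : ℕ → K} {s t : K} {n : ℕ}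

lemma tridiagonal_inv (hD : continuant b (-(s * t)) (n + 1) ≠ 0) :
    (tridiagonal b s t n)⁻¹ = (continuant b (-(s * t)) (n + 1))⁻¹ •
      Matrix.of fun i j : Fin n => tridiagonalAdjugate b s t n i j := by
  apply Matrix.inv_eq_right_inv
  rw [Matrix.mul_smul, tridiagonal_mul_adjugate, smul_smul, inv_mul_cancel₀ hD, one_smul]

variable [LinearOrder K] [IsStrictOrderedRing K]

lemma abs_tridiagonal_inv_le (hb : ∀ k, 0 < b k) (hst : s * t ≤ 0) {i j : Fin n}
    (hij : (i : ℕ) ≤ j) :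
    |(tridiagonal b s t n)⁻¹ i j|
      ≤ |t| ^ ((j : ℕ) - i) * continuant (fun l => b (n - 1 - l)) (-(s * t)) (n - j)
        / continuant (fun l => b (n - 1 - l)) (-(s * t)) (n - i + 1) := by
  have hc : 0 ≤ -(s * t) := neg_nonneg.2 hst
  have hb' : ∀ l, 0 < b (n - 1 - l) := fun l => hb _
  have hD := continuant_pos hb hc n
  have hθ := continuant_pos hb hc i
  have hφj := continuant_pos_of_ne_zero hb' hc (k := n - j) (by omega)
  have hφi := continuant_pos hb' hc (n - i)
  have hsplit := continuant_mul_le_of_add_eq hb hc (n := n) (k := i) (m := n - i) (by omega)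
  rw [tridiagonal_inv hD.ne']
  simp only [Matrix.smul_apply, Matrix.of_apply, smul_eq_mul, tridiagonalAdjugate_of_le hij,
    abs_mul, abs_inv, abs_pow, abs_neg, abs_of_pos hD, abs_of_pos hθ, abs_of_pos hφj]
  set θ := continuant b (-(s * t))
  set φ := continuant (fun l => b (n - 1 - l)) (-(s * t))
  have hratio : θ (i + 1) / θ (n + 1) ≤ 1 / φ (n - i + 1) := by
    rw [div_le_div_iff₀ hD hφi]
    linarith
  calc (θ (n + 1))⁻¹ * (|t| ^ ((j : ℕ) - i) * θ (i + 1) * φ (n - j))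
      = |t| ^ ((j : ℕ) - i) * φ (n - j) * (θ (i + 1) / θ (n + 1)) := by ring
    _ ≤ |t| ^ ((j : ℕ) - i) * φ (n - j) * (1 / φ (n - i + 1)) := by gcongr
    _ = _ := by ring

end Inverse

section Pivots

variable {K : Type*} [Field K] {b : ℕ → K} {c : K} {n : ℕ} {d : ℕ → K}

local notation "φ" => continuant (fun l => b (n - 1 - l)) c

lemma pivot_mul_continuant (hdn : d n = b (n - 1))
    (hdrec : ∀ l, l + 1 < n → d (l + 1) = b l + c / d (l + 2)) (hφ : ∀ m, φ (m + 1) ≠ 0)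
    {l m : ℕ} (h : l + m + 1 = n) : d (l + 1) * φ (m + 1) = φ (m + 2) := by
  induction m generalizing l with
  | zero =>
    subst h
    simp [continuant_add_two, hdn]
  | succ m ih =>
    have hpiv : d (l + 2) * φ (m + 1) = φ (m + 2) := ih (by omega)
    have hd : d (l + 2) ≠ 0 := fun h0 => hφ (m + 1) (by rw [← hpiv, h0, zero_mul])
    rw [hdrec l (by omega), continuant_add_two _ _ (m + 1), show n - 1 - (m + 1) = l by omega]
    field_simp
    linear_combination -c * hpiv

lemma prod_pivots_mul_continuant (hdn : d n = b (n - 1))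
    (hdrec : ∀ l, l + 1 < n → d (l + 1) = b l + c / d (l + 2)) (hφ : ∀ m, φ (m + 1) ≠ 0)
    {i j : ℕ} (hij : i ≤ j) (hj : j < n) :
    (∏ l ∈ Icc (i + 1) (j + 1), d l) * φ (n - j) = φ (n - i + 1) := by
  induction j, hij using Nat.le_induction with
  | base =>
    have hpiv := pivot_mul_continuant hdn hdrec hφ (l := i) (m := n - i - 1) (by omega)
    rwa [Icc_self, prod_singleton, show n - i = n - i - 1 + 1 by omega]
  | succ j hij ih =>
    have hpiv := pivot_mul_continuant hdn hdrec hφ (l := j + 1) (m := n - j - 2) (by omega)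
    rw [show n - j - 2 + 1 = n - (j + 1) by omega, show n - j - 2 + 2 = n - j by omega] at hpiv
    rw [prod_Icc_succ_top (by omega), mul_assoc, hpiv, ih (by omega)]

end Pivots

theorem stmt_10_general (μ : ℝ) (hμ : 0 < μ) (n : ℕ)
    (T : Matrix (Fin n) (Fin n) ℝ)
    (hT : ∀ i j : Fin n, T i j =
      if (i : ℕ) = j then (2 * ((j : ℕ) + 1) : ℝ)
      else if (i : ℕ) = (j : ℕ) + 1 then μ
      else if (j : ℕ) = (i : ℕ) + 1 then -μ
      else 0)
    (d : ℕ → ℝ)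
    (hdn : d n = 2 * n)
    (hdrec : ∀ j : ℕ, 1 ≤ j → j < n → d j = 2 * j + μ ^ 2 / d (j + 1)) :
    ∀ i j : Fin n, (i : ℕ) ≤ j →
      |T⁻¹ i j| ≤ μ ^ ((j : ℕ) - i) / ∏ l ∈ Finset.Icc ((i : ℕ) + 1) ((j : ℕ) + 1), d l := by
  intro i j hij
  let b : ℕ → ℝ := fun k => 2 * ((k : ℝ) + 1)
  have hb : ∀ k, 0 < b k := fun k => by positivity
  obtain rfl : T = tridiagonal b μ (-μ) n := Matrix.ext hT
  have hc : -(μ * -μ) = μ ^ 2 := by ring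
  have hdn' : d n = b (n - 1) := by
    simp only [b, hdn, Nat.cast_pred i.pos]
    ring
  have hdrec' : ∀ l, l + 1 < n → d (l + 1) = b l + μ ^ 2 / d (l + 2) := fun l hl => by
    rw [hdrec (l + 1) (by omega) hl]
    push_cast [b]
    ring
  have hb' : ∀ l, 0 < b (n - 1 - l) := fun l => hb _
  have hprod := prod_pivots_mul_continuant hdn' hdrec'
    (fun m => (continuant_pos hb' (sq_nonneg μ) m).ne') hij j.isLt
  have hφj := continuant_pos_of_ne_zero hb' (sq_nonneg μ) (k := n - j) (by omega)
  have hbound := abs_tridiagonal_inv_le hb (by nlinarith : μ * -μ ≤ 0) hij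
  rwa [abs_neg, abs_of_pos hμ, hc, ← hprod, mul_div_mul_right _ _ hφj.ne'] at hbound

theorem stmt_10 (μ : ℝ) (hμ : 0 < μ) (n : ℕ)
    (T : Matrix (Fin n) (Fin n) ℝ)
    (hT : ∀ i j : Fin n, T i j =
      if (i : ℕ) = j then (2 * ((j : ℕ) + 1) : ℝ)
      else if (i : ℕ) = (j : ℕ) + 1 then μ
      else if (j : ℕ) = (i : ℕ) + 1 then -μ
      else 0)
    (d : ℕ → ℝ)
    (hdn : d n = 2 * n)
    (hdrec : ∀ j : ℕ, 1 ≤ j → j < n → d j = 2 * j + μ ^ 2 / d (j + 1))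
    (hdpos : ∀ j : ℕ, 1 ≤ j → j ≤ n → 0 < d j) :
    ∀ i j : Fin n, (i : ℕ) ≤ j →
      |T⁻¹ i j| ≤ μ ^ ((j : ℕ) - i) / ∏ l ∈ Finset.Icc ((i : ℕ) + 1) ((j : ℕ) + 1), d l :=
  stmt_10_general μ hμ n T hT d hdn hdrec
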